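/- arXiv:2502.01754 — 5 statements merged into one kernel-verified Lean document; each statement's English description precedes it below -/
import Mathlib

section
/- Let (Ω, P) be a probability space, Q a measurable space of prompts, S : Ω → Q a random prompt, and W, W' : Ω → ℝ uniformly distributed on [0,1], with S, W, W' mutually independent. Let p, q : Q → ℝ be measurable with 0 < p(s) < 1 and 0 < q(s) < 1 for all s ∈ Q. Define the {0,1}-valued scores X = 1{W ≤ p(S)}, Y = 1{W ≤ q(S)} (coupled generation: shared noise W) and Y' = 1{W' ≤ q(S)} (independent generation: fresh noise W'). Then Var(X − Y') > Var(X − Y). -/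
/-!
Since `Var (X - Z) = Var X - 2 Cov (X, Z) + Var Z` and `Y`, `Y'` have the same law, only the
covariances differ, i.e. `E[X Y]` against `E[X Y']`. Given `S = s`, the coupled product
`X Y = 1{W ≤ min (p s) (q s)}` has mean `min (p s) (q s)`, while `X Y'` has mean `p s * q s`
because `W` and `W'` are independent uniforms; and `p q < min p q` on `(0, 1)`.
-/

open MeasureTheory ProbabilityTheory

lemma mul_lt_min_of_mem_Ioo {R : Type*} [Semiring R] [LinearOrder R] [IsStrictOrderedRing R]
    {a b : R} (ha : a ∈ Set.Ioo 0 1) (hb : b ∈ Set.Ioo 0 1) : a * b < min a b :=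
  lt_min (mul_lt_of_lt_one_right ha.1 hb.2) (mul_lt_of_lt_one_left hb.1 ha.2)

lemma ite_le_mul_ite_le {α M : Type*} [LinearOrder α] [MulZeroOneClass M] (w a b : α) :
    ((if w ≤ a then 1 else 0) * (if w ≤ b then 1 else 0) : M) =
      if w ≤ min a b then 1 else 0 := by
  simp only [ite_zero_mul_ite_zero, one_mul, le_min_iff]

lemma integral_ite_le_uniform {c : ℝ} (hc : c ∈ Set.Icc (0 : ℝ) 1) :
    ∫ w, (if w ≤ c then (1 : ℝ) else 0) ∂(volume.restrict (Set.Icc (0 : ℝ) 1)) = c := by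
  have hind : (fun w : ℝ => if w ≤ c then (1 : ℝ) else 0) = (Set.Iic c).indicator 1 := by
    ext w; simp [Set.indicator_apply]
  have hinter : Set.Iic c ∩ Set.Icc (0 : ℝ) 1 = Set.Icc 0 c := by
    ext w; simp only [Set.mem_inter_iff, Set.mem_Iic, Set.mem_Icc]
    exact ⟨fun ⟨hwc, hw0, _⟩ => ⟨hw0, hwc⟩,
      fun ⟨hw0, hwc⟩ => ⟨hwc, hw0, hwc.trans hc.2⟩⟩
  rw [hind, integral_indicator_one measurableSet_Iic,
    measureReal_restrict_apply measurableSet_Iic, hinter, Real.volume_real_Icc_of_le hc.1,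
    sub_zero]

section

variable {Ω α β : Type*} [MeasurableSpace Ω] [MeasurableSpace α] [MeasurableSpace β]
  {μ : Measure Ω}

lemma integral_lt_integral_of_forall_lt [NeZero μ] {f g : Ω → ℝ}
    (hf : Integrable f μ) (hg : Integrable g μ) (hfg : ∀ ω, f ω < g ω) :
    ∫ ω, f ω ∂μ < ∫ ω, g ω ∂μ := by
  have hsupp : Function.support (fun ω => g ω - f ω) = Set.univ :=
    Set.eq_univ_of_forall fun ω => (sub_pos.2 (hfg ω)).ne'
  rw [← sub_pos, ← integral_sub hg hf, integral_pos_iff_support_of_nonneg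
    (fun ω => (sub_pos.2 (hfg ω)).le) (hg.sub hf), hsupp, pos_iff_ne_zero]
  exact NeZero.ne _

lemma integrable_of_forall_mem_Icc [IsFiniteMeasure μ] {f : Ω → ℝ} (hf : Measurable f)
    (h01 : ∀ ω, f ω ∈ Set.Icc (0 : ℝ) 1) : Integrable f μ :=
  Integrable.of_bound hf.aestronglyMeasurable 1 (.of_forall fun ω => by
    rw [Real.norm_of_nonneg (h01 ω).1]; exact (h01 ω).2)

lemma memLp_ite_le [IsFiniteMeasure μ] {f g : Ω → ℝ} (hf : Measurable f) (hg : Measurable g)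
    (p : ENNReal) : MemLp (fun ω => if f ω ≤ g ω then (1 : ℝ) else 0) p μ :=
  MemLp.of_bound (Measurable.ite (measurableSet_le hf hg) measurable_const
    measurable_const).aestronglyMeasurable 1 (.of_forall fun ω => by
      split <;> simp)

lemma variance_fun_sub_lt_of_identDistrib [IsProbabilityMeasure μ] {A B B' : Ω → ℝ}
    (hA : MemLp A 2 μ) (hB : MemLp B 2 μ) (hB' : MemLp B' 2 μ) (hBB' : IdentDistrib B B' μ μ)
    (h : μ[A * B'] < μ[A * B]) :
    Var[fun ω => A ω - B ω; μ] < Var[fun ω => A ω - B' ω; μ] := by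
  rw [variance_fun_sub hA hB, variance_fun_sub hA hB', covariance_eq_sub hA hB,
    covariance_eq_sub hA hB', hBB'.variance_eq, hBB'.integral_eq]
  linarith

lemma identDistrib_prodMk_of_indepFun [IsFiniteMeasure μ] {S : Ω → α} {T T' : Ω → β}
    (hS : Measurable S) (hT : Measurable T) (hT' : Measurable T')
    (h : IndepFun S T μ) (h' : IndepFun S T' μ) (hTT' : μ.map T = μ.map T') :
    IdentDistrib (fun ω => (S ω, T ω)) (fun ω => (S ω, T' ω)) μ μ where
  aemeasurable_fst := (hS.prodMk hT).aemeasurable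
  aemeasurable_snd := (hS.prodMk hT').aemeasurable
  map_eq := by
    rw [h.map_prod_eq_prod_map_map hS.aemeasurable hT.aemeasurable,
      h'.map_prod_eq_prod_map_map hS.aemeasurable hT'.aemeasurable, hTT']

lemma ProbabilityTheory.IndepFun.integral_comp_prodMk [IsFiniteMeasure μ] {S : Ω → α}
    {T : Ω → β} (hS : Measurable S) (hT : Measurable T) (h : IndepFun S T μ)
    {F : α × β → ℝ} (hF : Integrable F ((μ.map S).prod (μ.map T))) :
    ∫ ω, F (S ω, T ω) ∂μ = ∫ s, ∫ t, F (s, t) ∂(μ.map T) ∂(μ.map S) := by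
  have hmap := h.map_prod_eq_prod_map_map hS.aemeasurable hT.aemeasurable
  rw [← integral_prod F hF, ← hmap, integral_map (hS.prodMk hT).aemeasurable
    (by rw [hmap]; exact hF.aestronglyMeasurable)]

lemma integral_ite_le_of_indepFun [IsFiniteMeasure μ] {S : Ω → α} {W : Ω → ℝ}
    (hS : Measurable S) (hW : Measurable W) (h : IndepFun S W μ)
    (hWunif : μ.map W = volume.restrict (Set.Icc (0 : ℝ) 1)) {r : α → ℝ} (hr : Measurable r)
    (hr01 : ∀ s, r s ∈ Set.Icc (0 : ℝ) 1) :
    ∫ ω, (if W ω ≤ r (S ω) then (1 : ℝ) else 0) ∂μ = ∫ s, r s ∂(μ.map S) := by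
  have hF := (memLp_ite_le (μ := (μ.map S).prod (μ.map W)) measurable_snd
    (hr.comp measurable_fst) 1).integrable le_rfl
  refine (h.integral_comp_prodMk hS hW hF).trans ?_
  rw [hWunif]
  exact integral_congr_ae (.of_forall fun s => integral_ite_le_uniform (hr01 s))

lemma integral_ite_le_mul_ite_le_of_indepFun [IsFiniteMeasure μ] {S : Ω → α}
    {W W' : Ω → ℝ} (hS : Measurable S) (hW : Measurable W) (hW' : Measurable W')
    (hWW' : IndepFun W W' μ) (hS_WW' : IndepFun S (fun ω => (W ω, W' ω)) μ)
    (hWunif : μ.map W = volume.restrict (Set.Icc (0 : ℝ) 1))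
    (hW'unif : μ.map W' = volume.restrict (Set.Icc (0 : ℝ) 1)) {r r' : α → ℝ}
    (hr : Measurable r) (hr' : Measurable r') (hr01 : ∀ s, r s ∈ Set.Icc (0 : ℝ) 1)
    (hr'01 : ∀ s, r' s ∈ Set.Icc (0 : ℝ) 1) :
    ∫ ω, (if W ω ≤ r (S ω) then (1 : ℝ) else 0) * (if W' ω ≤ r' (S ω) then 1 else 0) ∂μ =
      ∫ s, r s * r' s ∂(μ.map S) := by
  have hWW'unif : μ.map (fun ω => (W ω, W' ω))
      = (volume.restrict (Set.Icc (0 : ℝ) 1)).prod (volume.restrict (Set.Icc (0 : ℝ) 1)) := by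
    rw [hWW'.map_prod_eq_prod_map_map hW.aemeasurable hW'.aemeasurable, hWunif, hW'unif]
  have hF := ((memLp_ite_le (μ := (μ.map S).prod (μ.map fun ω => (W ω, W' ω)))
    (measurable_snd.comp measurable_snd) (hr'.comp measurable_fst) 1).mul'
    (memLp_ite_le (measurable_fst.comp measurable_snd) (hr.comp measurable_fst) ⊤)).integrable
    le_rfl
  refine (hS_WW'.integral_comp_prodMk hS (hW.prodMk hW') hF).trans ?_
  rw [hWW'unif]
  refine integral_congr_ae (.of_forall fun s => ?_)
  exact (integral_prod_mul (fun w => if w ≤ r s then (1 : ℝ) else 0)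
    (fun w => if w ≤ r' s then (1 : ℝ) else 0)).trans
    (by rw [integral_ite_le_uniform (hr01 s), integral_ite_le_uniform (hr'01 s)])

end

/-- **Proposition 2.** On a prompt distribution, let model `m` answer correctly with probability
`p(s)` and model `m'` with probability `q(s)` (both in `(0,1)`), the answers being generated by
thresholding a shared uniform noise `W` (coupled generation) or a fresh independent uniform noise
`W'` (independent generation). Then the variance of the difference of scores is strictly larger
under independent generation. -/
theorem variance_coupled_lt_variance_independent_two_token
    {Ω : Type*} [MeasurableSpace Ω] (P : Measure Ω) [IsProbabilityMeasure P]
    {Q : Type*} [MeasurableSpace Q]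
    (S : Ω → Q) (W W' : Ω → ℝ)
    (hS : Measurable S) (hW : Measurable W) (hW' : Measurable W')
    (hWunif : P.map W = volume.restrict (Set.Icc (0:ℝ) 1))
    (hW'unif : P.map W' = volume.restrict (Set.Icc (0:ℝ) 1))
    -- mutual independence of `S`, `W`, `W'`
    (hWW' : IndepFun W W' P)
    (hS_WW' : IndepFun S (fun ω => (W ω, W' ω)) P)
    (p q : Q → ℝ) (hp : Measurable p) (hq : Measurable q)
    (hp01 : ∀ s, p s ∈ Set.Ioo (0:ℝ) 1) (hq01 : ∀ s, q s ∈ Set.Ioo (0:ℝ) 1)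
    (X Y Y' : Ω → ℝ)
    (hX : X = fun ω => if W ω ≤ p (S ω) then 1 else 0)
    (hY : Y = fun ω => if W ω ≤ q (S ω) then 1 else 0)
    (hY' : Y' = fun ω => if W' ω ≤ q (S ω) then 1 else 0) :
    variance (fun ω => X ω - Y ω) P < variance (fun ω => X ω - Y' ω) P := by
  subst hX hY hY'
  have hSW : IndepFun S W P := hS_WW'.comp measurable_id measurable_fst
  have hSW' : IndepFun S W' P := hS_WW'.comp measurable_id measurable_snd
  have hp01' s : p s ∈ Set.Icc (0 : ℝ) 1 := Set.Ioo_subset_Icc_self (hp01 s)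
  have hq01' s : q s ∈ Set.Icc (0 : ℝ) 1 := Set.Ioo_subset_Icc_self (hq01 s)
  have hmin01 s : min (p s) (q s) ∈ Set.Icc (0 : ℝ) 1 :=
    ⟨le_min (hp01' s).1 (hq01' s).1, min_le_of_left_le (hp01' s).2⟩
  have hYY' : IdentDistrib (fun ω => if W ω ≤ q (S ω) then (1 : ℝ) else 0)
      (fun ω => if W' ω ≤ q (S ω) then (1 : ℝ) else 0) P P :=
    (identDistrib_prodMk_of_indepFun hS hW hW' hSW hSW' (hWunif.trans hW'unif.symm)).comp
      (u := fun x : Q × ℝ => if x.2 ≤ q x.1 then (1 : ℝ) else 0)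
      (Measurable.ite (measurableSet_le measurable_snd (hq.comp measurable_fst))
        measurable_const measurable_const)
  have hprod_lt :
      ∫ ω, (if W ω ≤ p (S ω) then (1 : ℝ) else 0) * (if W' ω ≤ q (S ω) then 1 else 0) ∂P <
        ∫ ω, (if W ω ≤ p (S ω) then (1 : ℝ) else 0) * (if W ω ≤ q (S ω) then 1 else 0) ∂P := by
    have : IsProbabilityMeasure (P.map S) := Measure.isProbabilityMeasure_map hS.aemeasurable
    simp only [ite_le_mul_ite_le]
    rw [integral_ite_le_mul_ite_le_of_indepFun hS hW hW' hWW' hS_WW' hWunif hW'unif hp hq hp01'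
      hq01', integral_ite_le_of_indepFun hS hW hSW hWunif (hp.min hq) hmin01]
    exact integral_lt_integral_of_forall_lt
      (integrable_of_forall_mem_Icc (hp.mul hq) fun s => unitInterval.mul_mem (hp01' s) (hq01' s))
      (integrable_of_forall_mem_Icc (hp.min hq) hmin01)
      fun s => mul_lt_min_of_mem_Ioo (hp01 s) (hq01 s)
  exact variance_fun_sub_lt_of_identDistrib (memLp_ite_le hW (hp.comp hS) 2)
    (memLp_ite_le hW (hq.comp hS) 2) (memLp_ite_le hW' (hq.comp hS) 2) hYY' hprod_lt
end

section
/- Let 0 < p < q < 1. Let X, Y be {0,1}-valued random variables on a common probability space with P(X = 1) = p, P(Y = 1) = q, P(X = 1 ∧ Y = 0) = 0, and let Y' be a {0,1}-valued random variable independent of X with P(Y' = 1) = q. Then P(X = Y) − P(X = Y') = 2·p·(1 − q), and in particular P(X = Y) > P(X = Y'). -/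
open MeasureTheory ProbabilityTheory

/-- Coupled generation produces more ties than independent generation: with `X, Y` coupled
(`P(X = 1 ∧ Y = 0) = 0`) and `Y'` independent of `X`, one has
`P(X = Y) − P(X = Y') = 2 p (1 − q) > 0`. -/
theorem ties_coupled_gt_ties_independent
    {Ω : Type*} [MeasurableSpace Ω] (P : Measure Ω) [IsProbabilityMeasure P]
    (p q : ℝ) (hp : 0 < p) (hpq : p < q) (hq : q < 1)
    (X Y Y' : Ω → ℝ) (hXm : Measurable X) (hYm : Measurable Y) (hY'm : Measurable Y')
    (hX01 : ∀ ω, X ω = 0 ∨ X ω = 1) (hY01 : ∀ ω, Y ω = 0 ∨ Y ω = 1)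
    (hY'01 : ∀ ω, Y' ω = 0 ∨ Y' ω = 1)
    (hX1 : P {ω | X ω = 1} = ENNReal.ofReal p)
    (hY1 : P {ω | Y ω = 1} = ENNReal.ofReal q)
    (hY'1 : P {ω | Y' ω = 1} = ENNReal.ofReal q)
    (hcoupled : P {ω | X ω = 1 ∧ Y ω = 0} = 0)
    (hindep : IndepFun X Y' P) :
    (P {ω | X ω = Y ω}).toReal - (P {ω | X ω = Y' ω}).toReal = 2 * p * (1 - q) ∧
      P {ω | X ω = Y' ω} < P {ω | X ω = Y ω} := by
  have hp0 : (0:ℝ) ≤ p := hp.le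
  have hq0 : (0:ℝ) ≤ q := hp0.trans hpq.le
  set A := X ⁻¹' {1} with hA_def
  set B := Y ⁻¹' {1} with hB_def
  set B' := Y' ⁻¹' {1} with hB'_def
  have hA : MeasurableSet A := hXm (measurableSet_singleton 1)
  have hB : MeasurableSet B := hYm (measurableSet_singleton 1)
  have hB' : MeasurableSet B' := hY'm (measurableSet_singleton 1)
  have hAset : {ω | X ω = 1} = A := rfl
  have hBset : {ω | Y ω = 1} = B := rfl
  have hB'set : {ω | Y' ω = 1} = B' := rfl
  rw [hAset] at hX1; rw [hBset] at hY1; rw [hB'set] at hY'1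
  -- the coupled event
  have hXY : {ω | X ω = Y ω} = (A ∩ B) ∪ (Aᶜ ∩ Bᶜ) := by
    ext ω
    rcases hX01 ω with h1 | h1 <;> rcases hY01 ω with h2 | h2 <;>
      simp [A, B, Set.mem_setOf_eq, h1, h2]
  have hXY' : {ω | X ω = Y' ω} = (A ∩ B') ∪ (Aᶜ ∩ B'ᶜ) := by
    ext ω
    rcases hX01 ω with h1 | h1 <;> rcases hY'01 ω with h2 | h2 <;>
      simp [A, B', Set.mem_setOf_eq, h1, h2]
  have hdiff0 : P (A \ B) = 0 := by
    have : A \ B = {ω | X ω = 1 ∧ Y ω = 0} := by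
      ext ω
      rcases hY01 ω with h2 | h2 <;>
        simp [A, B, Set.mem_setOf_eq, h2]
    rw [this, hcoupled]
  -- coupled probabilities
  have hAB : P (A ∩ B) = ENNReal.ofReal p := by
    have := measure_inter_add_diff A hB (μ := P)
    rw [hdiff0, add_zero] at this
    rw [this, hX1]
  have hAcBc : P (Aᶜ ∩ Bᶜ) = ENNReal.ofReal (1 - q) := by
    have h1 : Bᶜ \ Aᶜ = A \ B := by ext ω; simp [Set.mem_diff]; tauto
    have h2 := measure_inter_add_diff Bᶜ hA.compl (μ := P)
    rw [h1, hdiff0, add_zero, Set.inter_comm] at h2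
    rw [h2, prob_compl_eq_one_sub hB, hY1, ENNReal.ofReal_sub _ hq0,
      ENNReal.ofReal_one]
  -- independent probabilities
  have hAB' : P (A ∩ B') = ENNReal.ofReal (p * q) := by
    rw [hA_def, hB'_def,
      hindep.measure_inter_preimage_eq_mul _ _ (measurableSet_singleton 1)
        (measurableSet_singleton 1)]
    rw [← hA_def, ← hB'_def, hX1, hY'1, ENNReal.ofReal_mul hp0]
  have hAcB'c : P (Aᶜ ∩ B'ᶜ) = ENNReal.ofReal ((1 - p) * (1 - q)) := by
    have : Aᶜ ∩ B'ᶜ = X ⁻¹' {1}ᶜ ∩ Y' ⁻¹' {1}ᶜ := by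
      rw [hA_def, hB'_def, Set.preimage_compl, Set.preimage_compl]
    rw [this,
      hindep.measure_inter_preimage_eq_mul _ _ (measurableSet_singleton 1).compl
        (measurableSet_singleton 1).compl,
      Set.preimage_compl, Set.preimage_compl, ← hA_def, ← hB'_def,
      prob_compl_eq_one_sub hA, prob_compl_eq_one_sub hB', hX1, hY'1,
      ENNReal.ofReal_mul (by linarith)]
    rw [ENNReal.ofReal_sub _ hp0, ENNReal.ofReal_sub _ hq0, ENNReal.ofReal_one]
  -- disjointness
  have hdisj1 : Disjoint (A ∩ B) (Aᶜ ∩ Bᶜ) :=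
    Disjoint.mono Set.inter_subset_left Set.inter_subset_left disjoint_compl_right
  have hdisj2 : Disjoint (A ∩ B') (Aᶜ ∩ B'ᶜ) :=
    Disjoint.mono Set.inter_subset_left Set.inter_subset_left disjoint_compl_right
  have hPY : P {ω | X ω = Y ω} = ENNReal.ofReal (p + (1 - q)) := by
    rw [hXY, measure_union hdisj1 (hA.compl.inter hB.compl), hAB, hAcBc,
      ENNReal.ofReal_add hp0 (by linarith)]
  have hPY' : P {ω | X ω = Y' ω} = ENNReal.ofReal (p * q + (1 - p) * (1 - q)) := by
    rw [hXY', measure_union hdisj2 (hA.compl.inter hB'.compl), hAB', hAcB'c,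
      ENNReal.ofReal_add (by positivity) (by nlinarith)]
  constructor
  · rw [hPY, hPY', ENNReal.toReal_ofReal (by linarith),
      ENNReal.toReal_ofReal (by nlinarith)]
    ring
  · rw [hPY, hPY']
    apply (ENNReal.ofReal_lt_ofReal_iff (by linarith)).2
    nlinarith
end

section
/- Let V be a finite nonempty set and p : V → ℝ with p(k) > 0 for all k ∈ V and Σ_{k ∈ V} p(k) = 1. Let (U_k)_{k ∈ V} be independent random variables each with the standard Gumbel distribution. Then for every j ∈ V, P(∀ k ≠ j, log p(j) + U_j > log p(k) + U_k) = p(j). -/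
/-!
Write `F a = exp (-exp (-a))` for the Gumbel distribution function. Given `U j = x`, the event is
`U k < x + log (p j) - log (p k)` for all `k ≠ j`, of probability
`∏_{k ≠ j} F (x + log (p j) - log (p k)) = exp (-c e^{-x})` with `c = (∑_{k ≠ j} p k) / p j`.
Against the Gumbel density `e^{-x - e^{-x}}` this integrates to `1 / (1 + c) = p j`, because
`(1 + c) e^{-x - (1 + c) e^{-x}}` is the derivative of `exp (-(1 + c) e^{-x})`.
-/

open MeasureTheory ProbabilityTheory

/-- The standard Gumbel distribution on `ℝ`: the Borel probability measure with density
`x ↦ exp(−x − exp(−x))` with respect to Lebesgue measure. -/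
noncomputable def stdGumbel : Measure ℝ :=
  volume.withDensity fun x => ENNReal.ofReal (Real.exp (-x - Real.exp (-x)))

open Real Set Filter Topology

theorem integrableOn_Iic_deriv_of_nonneg' {g g' : ℝ → ℝ} {a l : ℝ}
    (hderiv : ∀ x ∈ Iic a, HasDerivAt g (g' x) x) (g'pos : ∀ x ∈ Iio a, 0 ≤ g' x)
    (hg : Tendsto g atBot (𝓝 l)) : IntegrableOn g' (Iic a) := by
  have hderiv_neg (y : ℝ) (hy : y ∈ Ici (-a)) : HasDerivAt (fun y => -g (-y)) (g' (-y)) y := by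
    have := ((hderiv (-y) (mem_Iic.2 (neg_le.1 hy))).comp y (hasDerivAt_neg y)).fun_neg
    simpa [Function.comp_def] using this
  have hneg : IntegrableOn (fun y => g' (-y)) (Ioi (-a)) :=
    integrableOn_Ioi_deriv_of_nonneg' hderiv_neg (fun y hy => g'pos (-y) (mem_Iio.2 (neg_lt.1 hy)))
      (hg.comp tendsto_neg_atTop_atBot).neg
  rw [← (Measure.measurePreserving_neg (volume : Measure ℝ)).integrableOn_comp_preimage
    (Homeomorph.neg ℝ).measurableEmbedding]
  simpa [integrableOn_Ici_iff_integrableOn_Ioi, Function.comp_def] using hneg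

theorem integrable_deriv_of_nonneg {g g' : ℝ → ℝ} {m n : ℝ}
    (hderiv : ∀ x, HasDerivAt g (g' x) x) (g'pos : ∀ x, 0 ≤ g' x)
    (hbot : Tendsto g atBot (𝓝 m)) (htop : Tendsto g atTop (𝓝 n)) : Integrable g' := by
  rw [← integrableOn_univ, ← Iic_union_Ioi (a := 0)]
  exact (integrableOn_Iic_deriv_of_nonneg' (fun x _ => hderiv x) (fun x _ => g'pos x) hbot).union
    (integrableOn_Ioi_deriv_of_nonneg' (fun x _ => hderiv x) (fun x _ => g'pos x) htop)

theorem measurePreserving_piSplitAt {ι : Type*} [Fintype ι] [DecidableEq ι] {X : ι → Type*}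
    [∀ i, MeasurableSpace (X i)] (μ : ∀ i, Measure (X i)) [∀ i, SigmaFinite (μ i)] (j : ι) :
    MeasurePreserving (Equiv.piSplitAt j X) (Measure.pi μ)
      ((μ j).prod (Measure.pi fun k : {k // k ≠ j} => μ k)) := by
  have h := measurePreserving_piEquivPiSubtypeProd μ (· = j)
  rw [Subsingleton.elim (Subtype.fintype _) (Fintype.subtypeEq j)] at h
  exact ((measurePreserving_piUnique fun k : {k // k = j} => μ k).prod (.id _)).comp h

theorem measurableSet_setOf_forall_ne_add_lt_add {ι : Type*} [Countable ι] (b : ι → ℝ) (j : ι) :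
    MeasurableSet {u : ι → ℝ | ∀ k ≠ j, b k + u k < b j + u j} := by
  simp only [ofPred_forall]
  exact .iInter fun k => .iInter fun _ => measurableSet_lt (by fun_prop) (by fun_prop)

theorem MeasureTheory.Measure.pi_setOf_forall_ne_add_lt_add {ι : Type*} [Fintype ι] [DecidableEq ι]
    (μ : ι → Measure ℝ) [∀ i, SigmaFinite (μ i)] (b : ι → ℝ) (j : ι) :
    Measure.pi μ {u | ∀ k ≠ j, b k + u k < b j + u j} =
      ∫⁻ x, ∏ k : {k // k ≠ j}, μ k (Iio (b j + x - b k)) ∂μ j := by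
  set S := {q : ℝ × ({k // k ≠ j} → ℝ) | ∀ k, q.2 k < b j + q.1 - b k.1}
  have hS : MeasurableSet S := by
    simp only [S, ofPred_forall]
    exact .iInter fun k => measurableSet_lt (by fun_prop) (by fun_prop)
  have hpre : {u : ι → ℝ | ∀ k ≠ j, b k + u k < b j + u j} = Equiv.piSplitAt j _ ⁻¹' S := by
    ext u
    simp only [S, mem_ofPred_eq, mem_preimage, Equiv.piSplitAt_apply, Subtype.forall]
    exact forall₂_congr fun k _ => by constructor <;> intro h <;> linarith
  rw [hpre, (measurePreserving_piSplitAt μ j).measure_preimage hS.nullMeasurableSet,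
    Measure.prod_apply hS]
  refine lintegral_congr fun x => ?_
  rw [← Measure.pi_pi]
  congr 1
  ext v
  simp [S]

theorem hasDerivAt_exp_neg_mul_exp_neg (c x : ℝ) :
    HasDerivAt (fun y => exp (-(c * exp (-y)))) (c * exp (-x - c * exp (-x))) x := by
  convert (((hasDerivAt_neg x).exp.const_mul c).fun_neg).exp using 1
  rw [sub_eq_add_neg, exp_add]
  ring

theorem tendsto_exp_neg_mul_exp_neg_atTop (c : ℝ) :
    Tendsto (fun y => exp (-(c * exp (-y)))) atTop (𝓝 1) := by
  have := (continuous_exp.tendsto _).comp (tendsto_exp_neg_atTop_nhds_zero.const_mul c).neg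
  simpa [Function.comp_def] using this

theorem tendsto_exp_neg_mul_exp_neg_atBot {c : ℝ} (hc : 0 < c) :
    Tendsto (fun y => exp (-(c * exp (-y)))) atBot (𝓝 0) :=
  tendsto_exp_atBot.comp <| tendsto_neg_atTop_atBot.comp <|
    (tendsto_exp_atTop.comp tendsto_neg_atBot_atTop).const_mul_atTop hc

theorem stdGumbel_Iio (a : ℝ) : stdGumbel (Iio a) = ENNReal.ofReal (exp (-exp (-a))) := by
  have hderiv (x : ℝ) := hasDerivAt_exp_neg_mul_exp_neg 1 x
  have hbot := tendsto_exp_neg_mul_exp_neg_atBot one_pos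
  simp only [one_mul] at hderiv hbot
  have hint := integrableOn_Iic_deriv_of_nonneg' (a := a) (fun x _ => hderiv x)
    (fun x _ => (exp_pos _).le) hbot
  rw [stdGumbel, withDensity_apply _ measurableSet_Iio, setLIntegral_congr Iio_ae_eq_Iic,
    ← ofReal_integral_eq_lintegral_ofReal hint (ae_of_all _ fun x => (exp_pos _).le),
    integral_Iic_of_hasDerivAt_of_tendsto' (fun x _ => hderiv x) hint hbot, sub_zero]

theorem lintegral_exp_neg_mul_exp_neg_stdGumbel {c : ℝ} (hc : 0 ≤ c) :
    ∫⁻ x, ENNReal.ofReal (exp (-(c * exp (-x)))) ∂stdGumbel = ENNReal.ofReal (1 + c)⁻¹ := by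
  have hc' : 0 < 1 + c := by linarith
  have hderiv := hasDerivAt_exp_neg_mul_exp_neg (1 + c)
  have hbot := tendsto_exp_neg_mul_exp_neg_atBot hc'
  have htop := tendsto_exp_neg_mul_exp_neg_atTop (1 + c)
  have hint := integrable_deriv_of_nonneg hderiv (fun x => by positivity) hbot htop
  have hdensity (x : ℝ) :
      ENNReal.ofReal (exp (-x - exp (-x))) * ENNReal.ofReal (exp (-(c * exp (-x)))) =
        ENNReal.ofReal ((1 + c)⁻¹ * ((1 + c) * exp (-x - (1 + c) * exp (-x)))) := by
    rw [← ENNReal.ofReal_mul (exp_pos _).le, ← exp_add, inv_mul_cancel_left₀ hc'.ne']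
    ring_nf
  rw [stdGumbel, lintegral_withDensity_eq_lintegral_mul _ (by fun_prop) (by fun_prop)]
  simp only [Pi.mul_apply, hdensity]
  rw [← ofReal_integral_eq_lintegral_ofReal (hint.const_mul _)
      (ae_of_all _ fun x => by positivity), integral_const_mul,
    integral_of_hasDerivAt_of_tendsto hderiv hint hbot htop, sub_zero, mul_one]

instance : IsProbabilityMeasure stdGumbel :=
  ⟨by simpa using lintegral_exp_neg_mul_exp_neg_stdGumbel le_rfl⟩

theorem stdGumbel_Iio_log_add_sub_log {a b : ℝ} (ha : 0 < a) (hb : 0 < b) (x : ℝ) :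
    stdGumbel (Iio (log a + x - log b)) = ENNReal.ofReal (exp (-(b / a * exp (-x)))) := by
  rw [stdGumbel_Iio, show -(log a + x - log b) = log b - log a + -x by ring, exp_add, exp_sub,
    exp_log ha, exp_log hb]

theorem stdGumbel_pi_setOf_forall_ne_log_add_lt {V : Type*} [Fintype V] (w : V → ℝ)
    (hw : ∀ k, 0 < w k) (j : V) :
    Measure.pi (fun _ => stdGumbel) {u | ∀ k ≠ j, log (w k) + u k < log (w j) + u j} =
      ENNReal.ofReal (w j / ∑ k, w k) := by
  classical
  set c := (∑ k : {k // k ≠ j}, w k) / w j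
  have hc : 0 ≤ c := div_nonneg (Finset.sum_nonneg fun k _ => (hw k).le) (hw j).le
  have hcdf_prod (x : ℝ) : ∏ k : {k // k ≠ j}, stdGumbel (Iio (log (w j) + x - log (w k))) =
      ENNReal.ofReal (exp (-(c * exp (-x)))) := by
    simp_rw [stdGumbel_Iio_log_add_sub_log (hw j) (hw _),
      ← ENNReal.ofReal_prod_of_nonneg fun _ _ => (exp_pos _).le, ← exp_sum,
      Finset.sum_neg_distrib, ← Finset.sum_mul, ← Finset.sum_div, c]
  rw [Measure.pi_setOf_forall_ne_add_lt_add, lintegral_congr hcdf_prod,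
    lintegral_exp_neg_mul_exp_neg_stdGumbel hc, Fintype.sum_eq_add_sum_subtype_ne _ j]
  congr 1
  simp only [c]
  field_simp [(hw j).ne']

theorem gumbel_max_trick_general
    {V : Type*} [Fintype V]
    (p : V → ℝ) (hp : ∀ k, 0 < p k) (hps : ∑ k, p k = 1)
    {Ω : Type*} [MeasurableSpace Ω] (P : Measure Ω)
    (U : V → Ω → ℝ) (hUm : ∀ k, Measurable (U k))
    (hindep : iIndepFun U P)
    (hgumbel : ∀ k, P.map (U k) = stdGumbel) (j : V) :
    P {ω | ∀ k ≠ j, Real.log (p k) + U k ω < Real.log (p j) + U j ω} =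
      ENNReal.ofReal (p j) := by
  have hlaw : P.map (fun ω k => U k ω) = Measure.pi fun _ => stdGumbel := by
    rw [hindep.map_fun_eq_pi_map fun k => (hUm k).aemeasurable]
    simp_rw [hgumbel]
  calc P {ω | ∀ k ≠ j, log (p k) + U k ω < log (p j) + U j ω}
      = P.map (fun ω k => U k ω) {u | ∀ k ≠ j, log (p k) + u k < log (p j) + u j} :=
        (Measure.map_apply (measurable_pi_lambda _ hUm)
          (measurableSet_setOf_forall_ne_add_lt_add _ j)).symm
    _ = ENNReal.ofReal (p j) := by
        rw [hlaw, stdGumbel_pi_setOf_forall_ne_log_add_lt p hp, hps, div_one]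

/-- **The Gumbel-max trick.** If `p` is a probability vector on a finite nonempty set `V` with
positive entries and `(U_k)_{k ∈ V}` are independent standard Gumbel random variables, then for
every `j ∈ V` the probability that `log p j + U j` strictly dominates all the other
`log p k + U k` equals `p j`. -/
theorem gumbel_max_trick
    {V : Type*} [Fintype V] [Nonempty V]
    (p : V → ℝ) (hp : ∀ k, 0 < p k) (hps : ∑ k, p k = 1)
    {Ω : Type*} [MeasurableSpace Ω] (P : Measure Ω) [IsProbabilityMeasure P]
    (U : V → Ω → ℝ) (hUm : ∀ k, Measurable (U k))
    (hindep : iIndepFun U P)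
    (hgumbel : ∀ k, P.map (U k) = stdGumbel) (j : V) :
    P {ω | ∀ k ≠ j, Real.log (p k) + U k ω < Real.log (p j) + U j ω} =
      ENNReal.ofReal (p j) :=
  gumbel_max_trick_general p hp hps P U hUm hindep hgumbel j
end

section
/- Let V be a finite nonempty set and p : V → ℝ with p(k) > 0 for all k ∈ V and Σ_{k ∈ V} p(k) = 1. Let (U_k)_{k ∈ V} be independent random variables each with the standard Gumbel distribution. Then the random variable max_{k ∈ V} (log p(k) + U_k) has the standard Gumbel distribution. -/
/-!
The CDF of the standard Gumbel distribution is `F(x) = exp (-exp (-x))`, so `log p + U` has CDF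
`exp (-p exp (-x))`. By independence the CDF of the maximum is the product of these,
`exp (-(∑ p) exp (-x)) = F(x)`.
-/

open MeasureTheory ProbabilityTheory Set Filter Real

lemma hasDerivAt_exp_neg_exp_neg (t : ℝ) :
    HasDerivAt (fun t => exp (-exp (-t))) (exp (-t - exp (-t))) t := by
  have h : HasDerivAt (fun t => -exp (-t)) (exp (-t)) t := by
    simpa using (hasDerivAt_neg t).exp.fun_neg
  convert h.exp using 1
  rw [sub_eq_add_neg, exp_add, mul_comm]

-- The density is dominated by `exp t` on the left half-line, since `exp (-t) ≥ -2t`.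
lemma integrableOn_gumbel_density_Iic (a : ℝ) :
    IntegrableOn (fun t => exp (-t - exp (-t))) (Iic a) := by
  refine (integrableOn_exp_Iic a).mono' (by fun_prop) (Eventually.of_forall fun t => ?_)
  rw [norm_of_nonneg (exp_pos _).le, exp_le_exp]
  linarith [two_mul_le_exp (x := -t)]

lemma integral_gumbel_density_Iic (a : ℝ) :
    ∫ t in Iic a, exp (-t - exp (-t)) = exp (-exp (-a)) := by
  have h_atBot : Tendsto (fun t => exp (-exp (-t))) atBot (nhds 0) :=
    tendsto_exp_atBot.comp <| tendsto_neg_atTop_atBot.comp <|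
      tendsto_exp_atTop.comp tendsto_neg_atBot_atTop
  simpa using integral_Iic_of_hasDerivAt_of_tendsto'
    (fun t _ => hasDerivAt_exp_neg_exp_neg t) (integrableOn_gumbel_density_Iic a) h_atBot

theorem stdGumbel_Iic (a : ℝ) :
    stdGumbel (Iic a) = ENNReal.ofReal (exp (-exp (-a))) := by
  rw [stdGumbel, withDensity_apply _ measurableSet_Iic,
    ← ofReal_integral_eq_lintegral_ofReal (integrableOn_gumbel_density_Iic a)
      (Eventually.of_forall fun t => (exp_pos _).le),
    integral_gumbel_density_Iic]

instance inst_s11 : IsProbabilityMeasure stdGumbel := by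
  constructor
  have h_cdf : Tendsto (fun a => exp (-exp (-a))) atTop (nhds (exp (-0))) :=
    (continuous_exp.tendsto _).comp <|
      (tendsto_exp_atBot.comp tendsto_neg_atTop_atBot).neg
  refine tendsto_nhds_unique (tendsto_measure_Iic_atTop stdGumbel) ?_
  simp_rw [stdGumbel_Iic]
  simpa [Function.comp_def] using (ENNReal.continuous_ofReal.tendsto _).comp h_cdf

lemma stdGumbel_map_const_add_Iic (c a : ℝ) :
    stdGumbel.map (c + ·) (Iic a) = ENNReal.ofReal (exp (-(exp c * exp (-a)))) := by
  rw [Measure.map_apply (measurable_const_add c) measurableSet_Iic, preimage_const_add_Iic,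
    stdGumbel_Iic, neg_sub, exp_sub, exp_neg a, div_eq_mul_inv]

lemma ProbabilityTheory.iIndepFun.map_iSup_Iic {ι Ω : Type*} [Fintype ι] [Nonempty ι]
    [MeasurableSpace Ω] {P : Measure Ω} {X : ι → Ω → ℝ} (hX : ∀ i, Measurable (X i)) (h : iIndepFun X P) (a : ℝ) :
    P.map (fun ω => ⨆ i, X i ω) (Iic a) = ∏ i, P.map (X i) (Iic a) := by
  have h_preimage : (fun ω => ⨆ i, X i ω) ⁻¹' Iic a = ⋂ i, X i ⁻¹' Iic a := by
    ext ω
    simp only [mem_preimage, mem_Iic, mem_iInter]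
    exact ciSup_le_iff (finite_range _).bddAbove
  rw [Measure.map_apply (Measurable.iSup hX) measurableSet_Iic, h_preimage,
    h.meas_iInter fun i => ⟨Iic a, measurableSet_Iic, rfl⟩]
  simp_rw [Measure.map_apply (hX _) measurableSet_Iic]

/-- If `p` is a probability vector on a finite nonempty set `V` with positive entries and
`(U_k)_{k ∈ V}` are independent standard Gumbel random variables, then
`max_{k ∈ V} (log p k + U k)` again has the standard Gumbel distribution. -/
theorem max_of_gumbels_is_gumbel
    {V : Type*} [Fintype V] [Nonempty V]
    (p : V → ℝ) (hp : ∀ k, 0 < p k) (hps : ∑ k, p k = 1)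
    {Ω : Type*} [MeasurableSpace Ω] (P : Measure Ω) [IsProbabilityMeasure P]
    (U : V → Ω → ℝ) (hUm : ∀ k, Measurable (U k))
    (hindep : iIndepFun U P)
    (hgumbel : ∀ k, P.map (U k) = stdGumbel) :
    P.map (fun ω => ⨆ k, (Real.log (p k) + U k ω)) = stdGumbel := by
  set X : V → Ω → ℝ := fun k ω => log (p k) + U k ω
  have hXm : ∀ k, Measurable (X k) := fun k => (hUm k).const_add _
  have hX_indep : iIndepFun X P := hindep.comp _ fun k => measurable_const_add _
  have hX_law : ∀ k, P.map (X k) = stdGumbel.map (log (p k) + ·) := fun k => by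
    rw [← hgumbel k, Measure.map_map (measurable_const_add _) (hUm k)]
    rfl
  have := Measure.isProbabilityMeasure_map (Measurable.iSup hXm).aemeasurable (μ := P)
  refine Measure.ext_of_Iic _ _ fun a => ?_
  rw [hX_indep.map_iSup_Iic hXm, stdGumbel_Iic]
  simp_rw [hX_law, stdGumbel_map_const_add_Iic, exp_log (hp _)]
  rw [← ENNReal.ofReal_prod_of_nonneg fun k _ => (exp_pos _).le, ← exp_sum,
    Finset.sum_neg_distrib, ← Finset.sum_mul, hps, one_mul]
end

section
/- Let V be a finite set with at least two elements, Q a finite nonempty set of prompts with weights w : Q → ℝ, w(s) ≥ 0 and Σ_{s ∈ Q} w(s) = 1, and c : Q → V an assignment of the correct token to each prompt. A model is a function p : Q → (V → ℝ) with p(s)(k) > 0 for all s, k and Σ_{k ∈ V} p(s)(k) = 1 for all s. Let S be a Q-valued random variable with P(S = s) = w(s), and let U = (U_k)_{k ∈ V} and U' = (U'_k)_{k ∈ V} be families of independent standard Gumbel random variables, with S, U, U' mutually independent. For a model p define the score R_p(U, S) = 1{∀ k ≠ c(S), log p(S)(c(S)) + U_{c(S)} > log p(S)(k) + U_k}. Then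 for every model p there exists ε > 0 such that for every model q with max_{s ∈ Q, k ∈ V} |p(s)(k) − q(s)(k)| < ε, one has Var(R_p(U, S) − R_q(U', S)) > Var(R_p(U, S) − R_q(U, S)). -/
/-!
Write `E_r` for the event that the correct token wins the Gumbel-max race under model `r`.
With shared noise, `E_p` and `E_q` differ only if, for the sampled prompt `s` and some wrong
token `k`, the difference `U_k - U_{c s}` falls between the log-odds thresholds
`log p_s(c s) - log p_s(k)` and `log q_s(c s) - log q_s(k)`. The Gumbel density is bounded by `1`,
so `Var(1_{E_p} - 1_{E_q}) ≤ P(E_p ∆ E_q)` is at most the total log-odds distance between `p` and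
`q`, which tends to `0` as `q → p`. With independent noise the two indicators are independent
given the prompt, so the variance is at least `∑ s, P(S = s) α_s (1 - α_s)`, where `α_s` is the
probability that `p` answers `s` correctly. This is positive: the Gumbel law charges every
nonempty open set, and both the winning region of `c s` and that of any other token are open.
-/

open MeasureTheory ProbabilityTheory

/-- The benchmark score of the model with next-token distributions `p` under noise `U` and
prompt `S`: the indicator of the event that the correct token `c (S ω)` strictly maximizes
`log (p (S ω) k) + U k ω` over `k ∈ V`. -/
noncomputable def score {Ω QT V : Type*} (p : QT → V → ℝ) (c : QT → V)
    (U : V → Ω → ℝ) (S : Ω → QT) : Ω → ℝ :=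
  Set.indicator
    {ω | ∀ k ≠ c (S ω),
      Real.log (p (S ω) k) + U k ω < Real.log (p (S ω) (c (S ω))) + U (c (S ω)) ω}
    fun _ => (1 : ℝ)

open Real Set Measure
open scoped symmDiff

lemma stdGumbel_le_volume : stdGumbel ≤ volume := by
  calc stdGumbel ≤ volume.withDensity 1 := by
        refine withDensity_mono (ae_of_all _ fun x => ?_)
        have := add_one_le_exp (-x)
        exact ENNReal.ofReal_le_one.2 (exp_le_one_iff.2 (by linarith))
    _ = volume := withDensity_one

lemma volume_absolutelyContinuous_stdGumbel : volume ≪ stdGumbel :=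
  withDensity_absolutelyContinuous' (by fun_prop) (ae_of_all _ fun x => by simp [exp_pos])

instance : SigmaFinite stdGumbel := SigmaFinite.withDensity_ofReal _

instance : IsOpenPosMeasure stdGumbel := volume_absolutelyContinuous_stdGumbel.isOpenPosMeasure

section StrictArgmax

variable {V : Type*}

def strictArgmaxSet (ℓ : V → ℝ) (j : V) : Set (V → ℝ) :=
  {u | ∀ k ≠ j, ℓ k + u k < ℓ j + u j}

lemma isOpen_strictArgmaxSet [Finite V] (ℓ : V → ℝ) (j : V) :
    IsOpen (strictArgmaxSet ℓ j) := by
  simp only [strictArgmaxSet, ofPred_forall]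
  exact isOpen_iInter_of_finite fun k => isOpen_iInter_of_finite fun _ =>
    isOpen_lt (by fun_prop) (by fun_prop)

lemma measurableSet_strictArgmaxSet [Finite V] (ℓ : V → ℝ) (j : V) :
    MeasurableSet (strictArgmaxSet ℓ j) :=
  (isOpen_strictArgmaxSet ℓ j).measurableSet

lemma score_eq_indicator {Ω Q : Type*} (p : Q → V → ℝ) (c : Q → V) (U : V → Ω → ℝ) (S : Ω → Q) :
    score p c U S = {ω | (fun k => U k ω) ∈
      strictArgmaxSet (fun k => Real.log (p (S ω) k)) (c (S ω))}.indicator 1 :=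
  rfl

lemma strictArgmaxSet_nonempty [DecidableEq V] (ℓ : V → ℝ) (j : V) :
    (strictArgmaxSet ℓ j).Nonempty :=
  ⟨fun k => if k = j then 1 - ℓ k else -ℓ k, fun k hk => by simp [hk]⟩

lemma disjoint_strictArgmaxSet (ℓ : V → ℝ) {j k : V} (h : j ≠ k) :
    Disjoint (strictArgmaxSet ℓ j) (strictArgmaxSet ℓ k) :=
  disjoint_left.2 fun _ hj hk => (hj k h.symm).not_gt (hk j h)

lemma strictArgmaxSet_diff_subset [DecidableEq V] [Fintype V] (ℓ ℓ' : V → ℝ) (j : V) :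
    strictArgmaxSet ℓ j \ strictArgmaxSet ℓ' j ⊆
      ⋃ k ∈ Finset.univ.erase j, {u | u k - u j ∈ uIcc (ℓ j - ℓ k) (ℓ' j - ℓ' k)} := by
  rintro u ⟨hwin, hlose⟩
  obtain ⟨k, hk, hle⟩ : ∃ k ≠ j, ℓ' j + u j ≤ ℓ' k + u k := by
    simpa [strictArgmaxSet] using hlose
  have := hwin k hk
  exact mem_biUnion (Finset.mem_erase.2 ⟨hk, Finset.mem_univ k⟩)
    (Icc_subset_uIcc' ⟨by linarith, by linarith⟩)

lemma strictArgmaxSet_symmDiff_subset [DecidableEq V] [Fintype V] (ℓ ℓ' : V → ℝ) (j : V) :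
    strictArgmaxSet ℓ j ∆ strictArgmaxSet ℓ' j ⊆
      ⋃ k ∈ Finset.univ.erase j, {u | u k - u j ∈ uIcc (ℓ j - ℓ k) (ℓ' j - ℓ' k)} := by
  refine union_subset (strictArgmaxSet_diff_subset ℓ ℓ' j) ?_
  simpa only [Set.uIcc_comm] using strictArgmaxSet_diff_subset ℓ' ℓ j

end StrictArgmax

section Noise

variable {Ω V : Type*} [MeasurableSpace Ω] {P : Measure Ω} [Fintype V] {U : V → Ω → ℝ}

lemma measure_preimage_pos_of_isOpen (hU : iIndepFun U P) (hUm : ∀ k, Measurable (U k))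
    (hlaw : ∀ k, P.map (U k) = stdGumbel) {O : Set (V → ℝ)} (hO : IsOpen O) (hne : O.Nonempty) :
    0 < P ((fun ω k => U k ω) ⁻¹' O) := by
  rw [← map_apply (measurable_pi_lambda _ hUm) hO.measurableSet,
    hU.map_fun_eq_pi_map fun k => (hUm k).aemeasurable]
  simp_rw [hlaw]
  exact hO.measure_pos _ hne

lemma measureReal_preimage_strictArgmaxSet_pos [IsFiniteMeasure P] (hU : iIndepFun U P)
    (hUm : ∀ k, Measurable (U k)) (hlaw : ∀ k, P.map (U k) = stdGumbel) (ℓ : V → ℝ) (j : V) :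
    0 < P.real ((fun ω k => U k ω) ⁻¹' strictArgmaxSet ℓ j) := by
  classical
  exact ENNReal.toReal_pos (measure_preimage_pos_of_isOpen hU hUm hlaw
    (isOpen_strictArgmaxSet ℓ j) (strictArgmaxSet_nonempty ℓ j)).ne' (measure_ne_top _ _)

lemma measureReal_preimage_compl_strictArgmaxSet_pos [Nontrivial V] [IsFiniteMeasure P]
    (hU : iIndepFun U P) (hUm : ∀ k, Measurable (U k)) (hlaw : ∀ k, P.map (U k) = stdGumbel)
    (ℓ : V → ℝ) (j : V) : 0 < P.real ((fun ω k => U k ω) ⁻¹' (strictArgmaxSet ℓ j)ᶜ) := by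
  obtain ⟨k, hkj⟩ := exists_ne j
  exact (measureReal_preimage_strictArgmaxSet_pos hU hUm hlaw ℓ k).trans_le <| measureReal_mono
    (preimage_mono ((disjoint_strictArgmaxSet ℓ hkj.symm).subset_compl_left)) (measure_ne_top _ _)

variable [IsProbabilityMeasure P]

lemma measure_sub_mem_uIcc_le {X Y : Ω → ℝ} (hXY : IndepFun X Y P) (hX : Measurable X)
    (hY : Measurable Y) (hY_le : P.map Y ≤ volume) (a b : ℝ) :
    P {ω | X ω - Y ω ∈ uIcc a b} ≤ ENNReal.ofReal |b - a| := by
  have hT : MeasurableSet {z : ℝ × ℝ | z.1 - z.2 ∈ uIcc a b} :=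
    (measurable_fst.sub measurable_snd) measurableSet_uIcc
  have : IsProbabilityMeasure (P.map X) := isProbabilityMeasure_map hX.aemeasurable
  calc P {ω | X ω - Y ω ∈ uIcc a b}
      = ((P.map X).prod (P.map Y)) {z : ℝ × ℝ | z.1 - z.2 ∈ uIcc a b} := by
        rw [← (indepFun_iff_map_prod_eq_prod_map_map hX.aemeasurable hY.aemeasurable).1 hXY,
          map_apply (hX.prodMk hY) hT]
        rfl
    _ = ∫⁻ x, P.map Y ((fun y => x - y) ⁻¹' uIcc a b) ∂P.map X := prod_apply hT
    _ ≤ ∫⁻ _, ENNReal.ofReal |b - a| ∂P.map X := by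
        refine lintegral_mono fun x => (Measure.le_iff'.1 hY_le _).trans_eq ?_
        rw [preimage_const_sub_uIcc, Real.volume_interval, sub_sub_sub_cancel_left, abs_sub_comm]
    _ = ENNReal.ofReal |b - a| := by simp

lemma measureReal_preimage_strictArgmaxSet_symmDiff_le [DecidableEq V] (hU : iIndepFun U P)
    (hUm : ∀ k, Measurable (U k)) (hU_le : ∀ k, P.map (U k) ≤ volume) (ℓ ℓ' : V → ℝ) (j : V) :
    P.real ((fun ω k => U k ω) ⁻¹' (strictArgmaxSet ℓ j ∆ strictArgmaxSet ℓ' j)) ≤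
      ∑ k ∈ Finset.univ.erase j, |(ℓ' j - ℓ' k) - (ℓ j - ℓ k)| :=
  calc _ ≤ P.real (⋃ k ∈ Finset.univ.erase j,
          {ω | U k ω - U j ω ∈ uIcc (ℓ j - ℓ k) (ℓ' j - ℓ' k)}) :=
        measureReal_mono (fun ω hω => by simpa using strictArgmaxSet_symmDiff_subset ℓ ℓ' j hω)
          (measure_ne_top _ _)
    _ ≤ ∑ k ∈ Finset.univ.erase j, P.real {ω | U k ω - U j ω ∈ uIcc (ℓ j - ℓ k) (ℓ' j - ℓ' k)} :=
        measureReal_biUnion_finset_le _ _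
    _ ≤ _ := Finset.sum_le_sum fun k hk => ENNReal.toReal_le_of_le_ofReal (abs_nonneg _)
        (measure_sub_mem_uIcc_le (hU.indepFun (Finset.ne_of_mem_erase hk)) (hUm k) (hUm j)
          (hU_le j) _ _)

lemma measureReal_setOf_mem_strictArgmaxSet_symmDiff_le [DecidableEq V] {Q : Type*} [Fintype Q]
    (hU : iIndepFun U P) (hUm : ∀ k, Measurable (U k)) (hU_le : ∀ k, P.map (U k) ≤ volume)
    (S : Ω → Q) (ℓ ℓ' : Q → V → ℝ) (j : Q → V) :
    P.real ({ω | (fun k => U k ω) ∈ strictArgmaxSet (ℓ (S ω)) (j (S ω))} ∆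
        {ω | (fun k => U k ω) ∈ strictArgmaxSet (ℓ' (S ω)) (j (S ω))}) ≤
      ∑ s, ∑ k ∈ Finset.univ.erase (j s), |(ℓ' s (j s) - ℓ' s k) - (ℓ s (j s) - ℓ s k)| :=
  calc _ ≤ P.real (⋃ s, (fun ω k => U k ω) ⁻¹'
          (strictArgmaxSet (ℓ s) (j s) ∆ strictArgmaxSet (ℓ' s) (j s))) :=
        measureReal_mono (fun ω hω => mem_iUnion.2 ⟨S ω, by simpa [mem_symmDiff] using hω⟩)
          (measure_ne_top _ _)
    _ ≤ _ := (measureReal_iUnion_fintype_le _).trans <| Finset.sum_le_sum fun s _ =>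
        measureReal_preimage_strictArgmaxSet_symmDiff_le hU hUm hU_le _ _ _

end Noise

/-- The right-hand side is `Var(1_E - 1_F)` for events `E`, `F` that, conditionally on an index `i`
drawn with probability `w i`, are independent with probabilities `a i` and `b i`. -/
lemma sum_mul_le_sum_mul_add_sum_mul_sub_sq {ι : Type*} [Fintype ι] {w a b : ι → ℝ}
    (hw : ∀ i, 0 ≤ w i) (hw1 : ∑ i, w i = 1) (hb : ∀ i, b i ∈ Icc 0 1) :
    ∑ i, w i * (a i * (1 - a i)) ≤
      ∑ i, w i * (a i * (1 - b i)) + ∑ i, w i * ((1 - a i) * b i) -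
        (∑ i, w i * a i - ∑ i, w i * b i) ^ 2 := by
  have hjensen : (∑ i, w i * (a i - b i)) ^ 2 ≤ ∑ i, w i * (a i - b i) ^ 2 := by
    simpa [hw1] using Finset.sum_sq_le_sum_mul_sum_of_sq_le_mul Finset.univ
      (r := fun i => w i * (a i - b i)) (fun i _ => hw i)
      (fun i _ => mul_nonneg (hw i) (sq_nonneg (a i - b i))) (fun i _ => le_of_eq (by ring))
  have hvar : 0 ≤ ∑ i, w i * (b i * (1 - b i)) :=
    Finset.sum_nonneg fun i _ => mul_nonneg (hw i) (mul_nonneg (hb i).1 (by linarith [(hb i).2]))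
  have hsum : ∑ i, w i * (a i * (1 - b i)) + ∑ i, w i * ((1 - a i) * b i) -
      ∑ i, w i * (a i - b i) ^ 2 = ∑ i, w i * (a i * (1 - a i)) + ∑ i, w i * (b i * (1 - b i)) := by
    simp only [← Finset.sum_add_distrib, ← Finset.sum_sub_distrib]
    exact Finset.sum_congr rfl fun i _ => by ring
  have hmean : ∑ i, w i * a i - ∑ i, w i * b i = ∑ i, w i * (a i - b i) := by
    simp only [mul_sub, Finset.sum_sub_distrib]
  rw [hmean]
  linarith

section Mixture

variable {Ω Q X Y : Type*} [MeasurableSpace Ω] [MeasurableSpace Q] [MeasurableSpace X]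
  [MeasurableSpace Y] [Fintype Q] [MeasurableSingletonClass Q]
  {P : Measure Ω} [IsProbabilityMeasure P] {S : Ω → Q}

lemma measureReal_setOf_mem_inter_setOf_mem {Φ : Ω → X} {Ψ : Ω → Y} (hS : Measurable S)
    (hΦ : Measurable Φ) (hΨ : Measurable Ψ) (hSΦΨ : IndepFun S (fun ω => (Φ ω, Ψ ω)) P)
    (hΦΨ : IndepFun Φ Ψ P) {A : Q → Set X} {B : Q → Set Y} (hA : ∀ s, MeasurableSet (A s))
    (hB : ∀ s, MeasurableSet (B s)) :
    P.real ({ω | Φ ω ∈ A (S ω)} ∩ {ω | Ψ ω ∈ B (S ω)}) =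
      ∑ s, P.real (S ⁻¹' {s}) * (P.real (Φ ⁻¹' A s) * P.real (Ψ ⁻¹' B s)) := by
  have hsplit : {ω | Φ ω ∈ A (S ω)} ∩ {ω | Ψ ω ∈ B (S ω)} =
      ⋃ s, S ⁻¹' {s} ∩ (fun ω => (Φ ω, Ψ ω)) ⁻¹' (A s ×ˢ B s) := by
    ext ω; simp
  have hdisj : Pairwise (Function.onFun Disjoint
      fun s => S ⁻¹' {s} ∩ (fun ω => (Φ ω, Ψ ω)) ⁻¹' (A s ×ˢ B s)) :=
    fun s t hst => ((disjoint_singleton.2 hst).preimage S).mono inter_subset_left inter_subset_left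
  rw [hsplit, measureReal_iUnion_fintype hdisj
    fun s => (hS (measurableSet_singleton s)).inter ((hΦ.prodMk hΨ) ((hA s).prod (hB s)))]
  refine Finset.sum_congr rfl fun s _ => ?_
  rw [measureReal_def,
    hSΦΨ.measure_inter_preimage_eq_mul _ _ (measurableSet_singleton s) ((hA s).prod (hB s)),
    mk_preimage_prod, hΦΨ.measure_inter_preimage_eq_mul _ _ (hA s) (hB s)]
  simp only [ENNReal.toReal_mul, measureReal_def]

lemma variance_indicator_sub_indicator {E F : Set Ω} (hE : MeasurableSet E)
    (hF : MeasurableSet F) :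
    variance (E.indicator 1 - F.indicator 1) P = P.real (E ∆ F) - (P.real E - P.real F) ^ 2 := by
  have hsq : (E.indicator (1 : Ω → ℝ) - F.indicator 1) ^ 2 = (E ∆ F).indicator 1 := by
    ext ω
    by_cases hωE : ω ∈ E <;> by_cases hωF : ω ∈ F <;> simp [hωE, hωF, mem_symmDiff]
  have hmem : MemLp (E.indicator (1 : Ω → ℝ) - F.indicator 1) 2 P := by
    refine (memLp_top_of_bound ?_ 1 (ae_of_all _ fun ω => ?_)).mono_exponent le_top
    · exact ((measurable_const.indicator hE).sub
        (measurable_const.indicator hF)).aestronglyMeasurable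
    · by_cases hωE : ω ∈ E <;> by_cases hωF : ω ∈ F <;> simp [hωE, hωF]
  rw [variance_eq_sub hmem, hsq, integral_indicator_one (hE.symmDiff hF),
    integral_sub' ((integrable_const 1).indicator hE) ((integrable_const 1).indicator hF),
    integral_indicator_one hE, integral_indicator_one hF]

lemma variance_indicator_sub_indicator_le {E F : Set Ω} (hE : MeasurableSet E)
    (hF : MeasurableSet F) : variance (E.indicator 1 - F.indicator 1) P ≤ P.real (E ∆ F) := by
  rw [variance_indicator_sub_indicator hE hF]
  linarith [sq_nonneg (P.real E - P.real F)]
lemma sum_measureReal_preimage_singleton_eq_one (hS : Measurable S) :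
    ∑ s, P.real (S ⁻¹' {s}) = 1 := by
  rw [sum_measureReal_preimage_singleton _ fun s _ => hS (measurableSet_singleton s)]
  simp

lemma measurableSet_setOf_mem {Z : Type*} [MeasurableSpace Z] {Θ : Ω → Z} {C : Q → Set Z}
    (hS : Measurable S) (hΘ : Measurable Θ) (hC : ∀ s, MeasurableSet (C s)) :
    MeasurableSet {ω | Θ ω ∈ C (S ω)} := by
  have : {ω | Θ ω ∈ C (S ω)} = ⋃ s, S ⁻¹' {s} ∩ Θ ⁻¹' C s := by
    ext ω; simp
  rw [this]
  exact .iUnion fun s => (hS (measurableSet_singleton s)).inter (hΘ (hC s))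

lemma sum_mul_le_variance_indicator_sub_indicator {Φ : Ω → X} {Ψ : Ω → Y} (hS : Measurable S)
    (hΦ : Measurable Φ) (hΨ : Measurable Ψ) (hSΦΨ : IndepFun S (fun ω => (Φ ω, Ψ ω)) P)
    (hΦΨ : IndepFun Φ Ψ P) {A : Q → Set X} {B : Q → Set Y} (hA : ∀ s, MeasurableSet (A s))
    (hB : ∀ s, MeasurableSet (B s)) :
    ∑ s, P.real (S ⁻¹' {s}) * (P.real (Φ ⁻¹' A s) * P.real (Φ ⁻¹' (A s)ᶜ)) ≤
      variance ({ω | Φ ω ∈ A (S ω)}.indicator 1 - {ω | Ψ ω ∈ B (S ω)}.indicator 1) P := by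
  set E := {ω | Φ ω ∈ A (S ω)}
  set F := {ω | Ψ ω ∈ B (S ω)}
  have hEm : MeasurableSet E := measurableSet_setOf_mem hS hΦ hA
  have hFm : MeasurableSet F := measurableSet_setOf_mem hS hΨ hB
  have hE : P.real E = ∑ s, P.real (S ⁻¹' {s}) * P.real (Φ ⁻¹' A s) := by
    simpa using measureReal_setOf_mem_inter_setOf_mem hS hΦ hΨ hSΦΨ hΦΨ hA
      fun _ => MeasurableSet.univ
  have hF : P.real F = ∑ s, P.real (S ⁻¹' {s}) * P.real (Ψ ⁻¹' B s) := by
    simpa using measureReal_setOf_mem_inter_setOf_mem hS hΦ hΨ hSΦΨ hΦΨ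
      (fun _ => MeasurableSet.univ) hB
  have hEF : P.real (E \ F) =
      ∑ s, P.real (S ⁻¹' {s}) * (P.real (Φ ⁻¹' A s) * P.real (Ψ ⁻¹' (B s)ᶜ)) :=
    measureReal_setOf_mem_inter_setOf_mem hS hΦ hΨ hSΦΨ hΦΨ hA fun s => (hB s).compl
  have hFE : P.real (F \ E) =
      ∑ s, P.real (S ⁻¹' {s}) * (P.real (Φ ⁻¹' (A s)ᶜ) * P.real (Ψ ⁻¹' B s)) := by
    rw [sdiff_eq, inter_comm]
    exact measureReal_setOf_mem_inter_setOf_mem hS hΦ hΨ hSΦΨ hΦΨ (fun s => (hA s).compl) hB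
  have hA' : ∀ s, P.real (Φ ⁻¹' (A s)ᶜ) = 1 - P.real (Φ ⁻¹' A s) :=
    fun s => probReal_compl_eq_one_sub (hΦ (hA s))
  have hB' : ∀ s, P.real (Ψ ⁻¹' (B s)ᶜ) = 1 - P.real (Ψ ⁻¹' B s) :=
    fun s => probReal_compl_eq_one_sub (hΨ (hB s))
  rw [variance_indicator_sub_indicator hEm hFm, measureReal_symmDiff_eq hEm hFm, hEF, hFE, hE, hF]
  simp only [hA', hB']
  exact sum_mul_le_sum_mul_add_sum_mul_sub_sq (fun _ => measureReal_nonneg)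
    (sum_measureReal_preimage_singleton_eq_one hS) fun _ => ⟨measureReal_nonneg, measureReal_le_one⟩

lemma sum_measureReal_preimage_singleton_mul_pos (hS : Measurable S) {f : Q → ℝ}
    (hf : ∀ s, 0 < f s) : 0 < ∑ s, P.real (S ⁻¹' {s}) * f s := by
  obtain ⟨s, -, hs⟩ := Finset.exists_lt_of_sum_lt (s := Finset.univ) (f := fun _ => (0 : ℝ))
    (g := fun s => P.real (S ⁻¹' {s})) (by simp [sum_measureReal_preimage_singleton_eq_one hS])
  exact Finset.sum_pos' (fun s _ => mul_nonneg measureReal_nonneg (hf s).le)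
    ⟨s, Finset.mem_univ s, mul_pos hs (hf s)⟩

end Mixture

lemma exists_pos_forall_abs_sub_lt_imp_lt {ι κ : Type*} [Fintype ι] [Fintype κ]
    {f : (ι → κ → ℝ) → ℝ} {p : ι → κ → ℝ} (hf : ContinuousAt f p) {η : ℝ} (hη : f p < η) :
    ∃ ε > 0, ∀ q, (∀ i j, |p i j - q i j| < ε) → f q < η := by
  obtain ⟨ε, hε, h⟩ := Metric.eventually_nhds_iff.1 (hf.eventually (gt_mem_nhds hη))
  refine ⟨ε, hε, fun q hq => h ?_⟩
  simpa only [dist_pi_lt_iff hε, Real.dist_eq, abs_sub_comm] using hq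

lemma ProbabilityTheory.iIndepFun.indepFun_pi_sumElim {Ω ι κ β : Type*} [MeasurableSpace Ω]
    {P : Measure Ω} [MeasurableSpace β] [Fintype ι] [Fintype κ] {f : ι → Ω → β} {g : κ → Ω → β}
    (h : iIndepFun (Sum.elim f g) P) (hf : ∀ i, Measurable (f i)) (hg : ∀ k, Measurable (g k)) :
    IndepFun (fun ω i => f i ω) (fun ω k => g k ω) P := by
  classical
  have hfg : ∀ i, Measurable (Sum.elim f g i) := Sum.rec hf hg
  exact (h.indepFun_finset (Finset.univ.image Sum.inl) (Finset.univ.image Sum.inr)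
    (by simp [Finset.disjoint_left]) hfg).comp
    (φ := fun v i => v ⟨Sum.inl i, by simp⟩) (ψ := fun v k => v ⟨Sum.inr k, by simp⟩)
    (measurable_pi_lambda _ fun _ => measurable_pi_apply _)
    (measurable_pi_lambda _ fun _ => measurable_pi_apply _)

section LogOdds

variable {Q V : Type*} [Fintype Q] [Fintype V] [DecidableEq V]

noncomputable def logOddsDist (c : Q → V) (p q : Q → V → ℝ) : ℝ :=
  ∑ s, ∑ k ∈ Finset.univ.erase (c s),
    |(Real.log (q s (c s)) - Real.log (q s k)) - (Real.log (p s (c s)) - Real.log (p s k))|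

lemma logOddsDist_self (c : Q → V) (p : Q → V → ℝ) : logOddsDist c p p = 0 := by
  simp [logOddsDist]

lemma continuousAt_logOddsDist (c : Q → V) {p : Q → V → ℝ} (hp : ∀ s k, 0 < p s k) :
    ContinuousAt (logOddsDist c p) p := by
  have hlog : ∀ s k, ContinuousAt (fun q : Q → V → ℝ => Real.log (q s k)) p := fun s k =>
    ((continuous_apply k).comp (continuous_apply s)).continuousAt.log (hp s k).ne'
  unfold logOddsDist
  exact tendsto_finsetSum _ fun s _ => tendsto_finsetSum _ fun k _ =>
    (((hlog s (c s)).sub (hlog s k)).sub continuousAt_const).abs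

end LogOdds

theorem variance_coupled_lt_variance_independent_gumbel_max_general
    {V : Type*} [Fintype V] (hV : 2 ≤ Fintype.card V)
    {QT : Type*} [Fintype QT] [MeasurableSpace QT]
    [MeasurableSingletonClass QT]
    (c : QT → V)
    {Ω : Type*} [MeasurableSpace Ω] (P : Measure Ω) [IsProbabilityMeasure P]
    (S : Ω → QT) (hS : Measurable S)
    (U U' : V → Ω → ℝ)
    (hUm : ∀ k, Measurable (U k)) (hU'm : ∀ k, Measurable (U' k))
    (hgumbel : ∀ k, P.map (U k) = stdGumbel)
    -- `S`, `U`, `U'` are mutually independent: the `2 |V|` Gumbel coordinates are mutually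
    -- independent, and `S` is independent of the pair of noise families `(U, U')`
    (hUU' : iIndepFun (Sum.elim U U') P)
    (hS_UU' : IndepFun S (fun ω => ((fun k => U k ω), fun k => U' k ω)) P)
    (p : QT → V → ℝ) (hp : ∀ s k, 0 < p s k) :
    ∃ ε > 0, ∀ q : QT → V → ℝ, (∀ s k, 0 < q s k) → (∀ s, ∑ k, q s k = 1) →
      (∀ s k, |p s k - q s k| < ε) →
      variance (fun ω => score p c U S ω - score q c U S ω) P <
        variance (fun ω => score p c U S ω - score q c U' S ω) P := by
  classical
  have : Nontrivial V := Fintype.one_lt_card_iff_nontrivial.1 hV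
  have hU : iIndepFun U P := hUU'.precomp (g := Sum.inl) Sum.inl_injective
  have hU_le : ∀ k, P.map (U k) ≤ volume := fun k => (hgumbel k).trans_le stdGumbel_le_volume
  let A : (QT → V → ℝ) → QT → Set (V → ℝ) :=
    fun r s => strictArgmaxSet (fun k => Real.log (r s k)) (c s)
  let m := ∑ s, P.real (S ⁻¹' {s}) *
    (P.real ((fun ω k => U k ω) ⁻¹' A p s) * P.real ((fun ω k => U k ω) ⁻¹' (A p s)ᶜ))
  have hm : 0 < m := sum_measureReal_preimage_singleton_mul_pos hS fun s =>
    mul_pos (measureReal_preimage_strictArgmaxSet_pos hU hUm hgumbel _ _)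
      (measureReal_preimage_compl_strictArgmaxSet_pos hU hUm hgumbel _ _)
  obtain ⟨ε, hε, hclose⟩ := exists_pos_forall_abs_sub_lt_imp_lt
    (continuousAt_logOddsDist c hp) (show logOddsDist c p p < m by rwa [logOddsDist_self])
  have hE : ∀ r, MeasurableSet {ω | (fun k => U k ω) ∈ A r (S ω)} := fun r =>
    measurableSet_setOf_mem hS (measurable_pi_lambda _ hUm) fun _ =>
      measurableSet_strictArgmaxSet _ _
  refine ⟨ε, hε, fun q _ _ hpq => ?_⟩
  show variance (score p c U S - score q c U S) P < variance (score p c U S - score q c U' S) P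
  simp only [score_eq_indicator]
  calc _ ≤ P.real ({ω | (fun k => U k ω) ∈ A p (S ω)} ∆ {ω | (fun k => U k ω) ∈ A q (S ω)}) :=
        variance_indicator_sub_indicator_le (hE p) (hE q)
    _ ≤ logOddsDist c p q :=
        measureReal_setOf_mem_strictArgmaxSet_symmDiff_le hU hUm hU_le S
          (fun s k => Real.log (p s k)) (fun s k => Real.log (q s k)) c
    _ < m := hclose q hpq
    _ ≤ _ := sum_mul_le_variance_indicator_sub_indicator (A := A p) (B := A q) hS
        (measurable_pi_lambda _ hUm) (measurable_pi_lambda _ hU'm) hS_UU'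
        (hUU'.indepFun_pi_sumElim hUm hU'm)
        (fun _ => measurableSet_strictArgmaxSet _ _) (fun _ => measurableSet_strictArgmaxSet _ _)

/-- **Proposition 3.** On a benchmark with one correct single-token answer per prompt, for every
model `p` (sampling via the Gumbel-max mechanism) there is `ε > 0` such that for every
sufficiently close model `q` (`sup-distance < ε`), the variance of the difference of scores is
strictly smaller under coupled generation (shared Gumbel noise `U`) than under independent
generation (fresh noise `U'` for the second model). -/
theorem variance_coupled_lt_variance_independent_gumbel_max
    {V : Type*} [Fintype V] (hV : 2 ≤ Fintype.card V)
    {QT : Type*} [Fintype QT] [Nonempty QT] [MeasurableSpace QT]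
    [MeasurableSingletonClass QT]
    (w : QT → ℝ) (hw : ∀ s, 0 ≤ w s) (hws : ∑ s, w s = 1)
    (c : QT → V)
    {Ω : Type*} [MeasurableSpace Ω] (P : Measure Ω) [IsProbabilityMeasure P]
    (S : Ω → QT) (hS : Measurable S) (hSw : ∀ s, P (S ⁻¹' {s}) = ENNReal.ofReal (w s))
    (U U' : V → Ω → ℝ)
    (hUm : ∀ k, Measurable (U k)) (hU'm : ∀ k, Measurable (U' k))
    (hgumbel : ∀ k, P.map (U k) = stdGumbel) (hgumbel' : ∀ k, P.map (U' k) = stdGumbel)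
    -- `S`, `U`, `U'` are mutually independent: the `2 |V|` Gumbel coordinates are mutually
    -- independent, and `S` is independent of the pair of noise families `(U, U')`
    (hUU' : iIndepFun (Sum.elim U U') P)
    (hS_UU' : IndepFun S (fun ω => ((fun k => U k ω), fun k => U' k ω)) P)
    (p : QT → V → ℝ) (hp : ∀ s k, 0 < p s k) (hps : ∀ s, ∑ k, p s k = 1) :
    ∃ ε > 0, ∀ q : QT → V → ℝ, (∀ s k, 0 < q s k) → (∀ s, ∑ k, q s k = 1) →
      (∀ s k, |p s k - q s k| < ε) →
      variance (fun ω => score p c U S ω - score q c U S ω) P <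
        variance (fun ω => score p c U S ω - score q c U' S ω) P :=
  variance_coupled_lt_variance_independent_gumbel_max_general hV c P S hS U U' hUm hU'm hgumbel hUU'
    hS_UU' p hp
end
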